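/- For every nonnegative integer n and complex number x such that no denominator vanishes, the sum over k from 0 to n of ((3x)_k (2-3x)_k (-n)_k) / (k! (3/2)_k (-1-3n)_k) * (3/4)^k equals ((2/3 + x)_n (4/3 - x)_n) / ((2/3)_n (4/3)_n). (Gosper's second 3F2(3/4) identity.) -/

import Mathlib

/-- Pochhammer symbol (rising factorial) `(a)_k`. -/
noncomputable def poch (a : ℂ) (k : ℕ) : ℂ := ∏ j ∈ Finset.range k, (a + j)

/-!
Creative telescoping (the WZ method). Write `T n k` for the summand and `S n = ∑ₖ T n k`.
The termwise identity
`(2/3 + n) (4/3 + n) T (n + 1) k - (2/3 + x + n) (4/3 - x + n) T n k = G (k + 1) - G k`,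
with the certificate `G (k + 1) = -(3x + k) (2 - 3x + k) / 9 · T n k` found by Zeilberger's
algorithm, becomes an identity of rational functions in
`x`, `n`, `k` after dividing by `T n k`. Summing over `k`, it telescopes to the recurrence
`(2/3 + n) (4/3 + n) S (n + 1) = (2/3 + x + n) (4/3 - x + n) S n`, which the right-hand side also
satisfies.
-/

open Finset

lemma poch_zero (a : ℂ) : poch a 0 = 1 := prod_range_zero _

lemma poch_succ_right (a : ℂ) (k : ℕ) : poch a (k + 1) = poch a k * (a + k) :=
  prod_range_succ _ _

lemma poch_add (a : ℂ) (m k : ℕ) : poch a (m + k) = poch a m * poch (a + m) k := by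
  simp only [poch, prod_range_add, Nat.cast_add, add_assoc]

lemma poch_succ_left (a : ℂ) (k : ℕ) : poch a (k + 1) = a * poch (a + 1) k := by
  rw [add_comm, poch_add]
  simp [poch]

lemma poch_succ_mul_eq_mul_poch_add_three (a : ℂ) (k : ℕ) :
    poch a (k + 1) * ((a + (k + 1)) * (a + (k + 2))) = a * (a + 1) * (a + 2) * poch (a + 3) k := by
  have h := poch_add a 3 k
  rw [add_comm 3 k, poch_succ_right, poch_succ_right] at h
  simp only [poch, prod_range_succ, prod_range_zero] at h ⊢
  push_cast at h ⊢
  linear_combination h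

lemma poch_ne_zero_of_re_pos {a : ℂ} (ha : 0 < a.re) (k : ℕ) : poch a k ≠ 0 :=
  prod_ne_zero_iff.mpr fun i _ => Complex.ne_zero_of_re_pos <| by
    simp only [Complex.add_re, Complex.natCast_re]
    positivity

lemma poch_neg_natCast_eq_zero {m k : ℕ} (h : m < k) : poch (-(m : ℂ)) k = 0 :=
  prod_eq_zero (mem_range.mpr h) (by simp)

lemma mul_sum_range_eq_of_creative_telescoping {R : Type*} [CommRing R] {u v g : ℕ → R}
    {a b : R} {n : ℕ} (hv : v (n + 1) = 0) (h_zero : a * u 0 - b * v 0 = g 0 * v 0)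
    (h_succ : ∀ k ≤ n, a * u (k + 1) - b * v (k + 1) = g (k + 1) * v (k + 1) - g k * v k) :
    a * ∑ k ∈ range (n + 2), u k = b * ∑ k ∈ range (n + 1), v k := by
  have htel : ∑ k ∈ range (n + 2), (a * u k - b * v k) = g (n + 1) * v (n + 1) := by
    rw [sum_range_succ', sum_congr rfl fun k hk => h_succ k (Nat.lt_succ_iff.mp (mem_range.mp hk)),
      sum_range_sub (fun k => g k * v k), h_zero]
    ring
  rw [sum_sub_distrib, ← mul_sum, ← mul_sum, sum_range_succ v (n + 1), hv, mul_zero] at htel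
  linear_combination htel

section GosperTerm

noncomputable def gosperTerm (x : ℂ) (n k : ℕ) : ℂ :=
  (poch (3*x) k * poch (2 - 3*x) k * poch (-(n : ℂ)) k) /
    ((Nat.factorial k : ℂ) * poch (3/2) k * poch (-1 - 3*n : ℂ) k) * (3/4 : ℂ)^k

variable (x : ℂ)

lemma gosperTerm_zero (n : ℕ) : gosperTerm x n 0 = 1 := by
  simp [gosperTerm, poch_zero]

lemma gosperTerm_eq_zero_of_lt {n k : ℕ} (h : n < k) : gosperTerm x n k = 0 := by
  simp [gosperTerm, poch_neg_natCast_eq_zero h]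

lemma gosperTerm_succ (n k : ℕ) :
    gosperTerm x n (k + 1) = gosperTerm x n k *
      ((3*x + k) * (2 - 3*x + k) * (-n + k) / ((k + 1) * (3/2 + k) * (-1 - 3*n + k)) * (3/4)) := by
  simp only [gosperTerm, poch_succ_right, Nat.factorial_succ, pow_succ, Nat.cast_mul,
    Nat.cast_succ, div_eq_mul_inv, mul_inv]
  ring

lemma gosperTerm_succ_succ {n j : ℕ} (hj : j ≤ n) :
    gosperTerm x (n + 1) (j + 1) = gosperTerm x n j *
      ((3*x + j) * (2 - 3*x + j) * (n + 1) * (3*n + 3 - j) * (3*n + 2 - j) /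
        ((j + 1) * (3/2 + j) * (3*n + 2) * (3*n + 3) * (3*n + 4)) * (3/4)) := by
  have hnum : poch (-(n + 1)) (j + 1) = -(n + 1) * poch (-n) j := by
    rw [poch_succ_left]
    ring_nf
  have hden : poch (-1 - 3 * (n + 1)) (j + 1) =
      -((3*n + 4) * (3*n + 3) * (3*n + 2)) * poch (-1 - 3*n) j /
        ((3*n + 3 - j) * (3*n + 2 - j)) := by
    have hj' : (3*n + 3 - j : ℂ) * (3*n + 2 - j) ≠ 0 := by
      refine mul_ne_zero ?_ ?_ <;> (rw [sub_ne_zero]; norm_cast; omega)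
    have h := poch_succ_mul_eq_mul_poch_add_three (-1 - 3 * (n + 1)) j
    rw [show -1 - 3 * ((n : ℂ) + 1) + 3 = -1 - 3 * n by ring] at h
    rw [eq_div_iff hj']
    linear_combination h
  simp only [gosperTerm, Nat.cast_succ, hnum, hden, poch_succ_right, Nat.factorial_succ, pow_succ,
    Nat.cast_mul, div_eq_mul_inv, mul_inv, inv_inv, neg_mul, inv_neg]
  ring

noncomputable def gosperCert (k : ℕ) : ℂ := -(3*x + k) * (2 - 3*x + k) / 9

lemma gosperTerm_wz {n k : ℕ} (hk : k ≤ n) :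
    (2/3 + n) * (4/3 + n) * gosperTerm x (n + 1) (k + 1)
      - (2/3 + x + n) * (4/3 - x + n) * gosperTerm x n (k + 1)
      = gosperCert x (k + 1) * gosperTerm x n (k + 1) - gosperCert x k * gosperTerm x n k := by
  have hk1 : (k + 1 : ℂ) ≠ 0 := Nat.cast_add_one_ne_zero k
  have hk3 : (3 + 2 * k : ℂ) ≠ 0 := by norm_cast; omega
  have hkn : (-1 - 3 * n + k : ℂ) ≠ 0 := by
    rw [← neg_ne_zero]; ring_nf; rw [sub_ne_zero]; norm_cast; omega
  have hn2 : (3 * n + 2 : ℂ) ≠ 0 := by norm_cast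
  have hn3 : (3 * n + 3 : ℂ) ≠ 0 := by norm_cast
  have hn4 : (3 * n + 4 : ℂ) ≠ 0 := by norm_cast
  rw [gosperTerm_succ_succ x hk, gosperTerm_succ, gosperCert, gosperCert]
  push_cast
  field_simp
  ring

lemma sum_gosperTerm_mul (n : ℕ) :
    (∑ k ∈ range (n + 1), gosperTerm x n k) * (poch (2/3) n * poch (4/3) n)
      = poch (2/3 + x) n * poch (4/3 - x) n := by
  induction n with
  | zero => simp [gosperTerm_zero, poch_zero]
  | succ n ih =>
    have hrec := mul_sum_range_eq_of_creative_telescoping (g := gosperCert x)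
      (gosperTerm_eq_zero_of_lt x n.lt_succ_self)
      (by simp only [gosperTerm_zero, gosperCert]; push_cast; ring)
      (fun k hk => gosperTerm_wz x hk)
    rw [poch_succ_right (2/3), poch_succ_right (4/3), poch_succ_right (2/3 + x),
      poch_succ_right (4/3 - x)]
    linear_combination (poch (2/3) n * poch (4/3) n) * hrec + (2/3 + x + n) * (4/3 - x + n) * ih

end GosperTerm

theorem gosper_second_3F2_general (n : ℕ) (x : ℂ) :
    ∑ k ∈ Finset.range (n+1),
      (poch (3*x) k * poch (2 - 3*x) k * poch (-(n : ℂ)) k) /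
        ((Nat.factorial k : ℂ) * poch (3/2) k * poch (-1 - 3*n : ℂ) k) * (3/4 : ℂ)^k
      = (poch (2/3 + x) n * poch (4/3 - x) n) / (poch (2/3) n * poch (4/3) n) := by
  rw [eq_div_iff (mul_ne_zero (poch_ne_zero_of_re_pos (by norm_num) n)
    (poch_ne_zero_of_re_pos (by norm_num) n))]
  exact sum_gosperTerm_mul x n

theorem gosper_second_3F2 (n : ℕ) (x : ℂ)
    (hden : ∀ k ≤ n, poch (3/2) k ≠ 0 ∧ poch (-1 - 3*n : ℂ) k ≠ 0)
    (h23 : poch (2/3) n ≠ 0) (h43 : poch (4/3) n ≠ 0) :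
    ∑ k ∈ Finset.range (n+1),
      (poch (3*x) k * poch (2 - 3*x) k * poch (-(n : ℂ)) k) /
        ((Nat.factorial k : ℂ) * poch (3/2) k * poch (-1 - 3*n : ℂ) k) * (3/4 : ℂ)^k
      = (poch (2/3 + x) n * poch (4/3 - x) n) / (poch (2/3) n * poch (4/3) n) :=
  gosper_second_3F2_general n x
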